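/- For d ≥ 3, fix 1 ≤ α ≤ d and z ∈ ℝ^d, and let v(x) = ∂/∂x_α (|x − z|^{2−d}) = (2−d)(x_α − z_α)|x − z|^{−d}. Then ∑_{g∈ℤ^d} ‖v‖_{L²([0,1)^d+g)} = ∞; i.e., the dipole potential v does not lie in the ℓ¹-type space V¹₀. -/

import Mathlib

open MeasureTheory

/-- The Euclidean norm of `x ∈ ℝ^d`. -/
noncomputable def enorm' {d : ℕ} (x : Fin d → ℝ) : ℝ :=
  Real.sqrt (∑ i, x i ^ 2)

/-- The unit cube `[0,1)^d + g`. -/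
def cube {d : ℕ} (g : Fin d → ℤ) : Set (Fin d → ℝ) :=
  Set.univ.pi fun i => Set.Ico (g i : ℝ) ((g i : ℝ) + 1)

/-! On the cubes `g` with `g α = n` and `1 ≤ g i ≤ n` (there are `n ^ (d - 1)` of them), once
`n ≥ 2 |z|` we have `x α - z α ≥ n / 2` and `|x - z| ≤ 3 √d n`, so the dipole is at least
`(n / 2) (3 √d n) ^ (-d)` there. Each such slice of cubes therefore contributes at least the
constant `(2 (3 √d) ^ d)⁻¹` to the sum, and the slices for different `n` are disjoint. -/

open Function

variable {d : ℕ}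

lemma abs_le_enorm' (x : Fin d → ℝ) (i : Fin d) : |x i| ≤ enorm' x := by
  rw [← Real.sqrt_sq_eq_abs]
  exact Real.sqrt_le_sqrt (Finset.single_le_sum (fun j _ => sq_nonneg (x j)) (Finset.mem_univ i))

lemma enorm'_le_sqrt_mul {x : Fin d → ℝ} {M : ℝ} (hM : 0 ≤ M) (hx : ∀ i, |x i| ≤ M) :
    enorm' x ≤ √d * M := by
  calc enorm' x ≤ √(∑ _i : Fin d, M ^ 2) :=
        Real.sqrt_le_sqrt <| Finset.sum_le_sum fun i _ =>
          sq_le_sq' (abs_le.1 (hx i)).1 (abs_le.1 (hx i)).2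
    _ = √d * M := by
        rw [Finset.sum_const, Finset.card_univ, Fintype.card_fin, nsmul_eq_mul,
          Real.sqrt_mul (Nat.cast_nonneg d), Real.sqrt_sq hM]

lemma continuous_enorm' : Continuous (enorm' : (Fin d → ℝ) → ℝ) := by
  unfold enorm'
  fun_prop

lemma volume_cube (g : Fin d → ℤ) : volume (cube g) = 1 := by
  simp [cube, volume_pi_pi, Real.volume_Ico]

lemma cube_subset_Icc (g : Fin d → ℤ) :
    cube g ⊆ Set.Icc (fun i => (g i : ℝ)) (fun i => (g i : ℝ) + 1) :=
  fun _ hx => ⟨fun i => (hx i (Set.mem_univ i)).1, fun i => (hx i (Set.mem_univ i)).2.le⟩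

lemma le_sqrt_setIntegral_cube {F : (Fin d → ℝ) → ℝ} {b : ℝ} (g : Fin d → ℤ)
    (hF : ContinuousOn F (Set.Icc (fun i => (g i : ℝ)) (fun i => (g i : ℝ) + 1)))
    (hb : 0 ≤ b) (hbF : ∀ x ∈ cube g, b ≤ |F x|) :
    b ≤ √(∫ x in cube g, |F x| ^ 2) := by
  have hint : IntegrableOn (fun x => |F x| ^ 2) (cube g) :=
    ((hF.abs.pow 2).integrableOn_compact isCompact_Icc).mono_set (cube_subset_Icc g)
  have hmeas : MeasurableSet (cube g) := MeasurableSet.univ_pi fun _ => measurableSet_Ico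
  have h := setIntegral_ge_of_const_le_real hmeas (by simp [volume_cube])
    (fun x hx => pow_le_pow_left₀ hb (hbF x hx) 2) hint
  rw [measureReal_def, volume_cube, ENNReal.toReal_one, mul_one] at h
  exact Real.le_sqrt_of_sq_le h

noncomputable def dipole (α : Fin d) (z x : Fin d → ℝ) : ℝ :=
  ((2 : ℝ) - d) * (x α - z α) * enorm' (fun i => x i - z i) ^ (-(d : ℝ))

lemma continuousOn_dipole (α : Fin d) (z : Fin d → ℝ) :
    ContinuousOn (dipole α z) {x | x α ≠ z α} := by
  intro x hx
  have hne : enorm' (fun i => x i - z i) ≠ 0 :=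
    ((abs_pos.2 (sub_ne_zero.2 hx)).trans_le (abs_le_enorm' (fun i => x i - z i) α)).ne'
  refine ContinuousAt.continuousWithinAt ?_
  exact (continuous_const.mul ((continuous_apply α).sub continuous_const)).continuousAt.mul
    ((continuous_enorm'.comp (by fun_prop)).continuousAt.rpow_const (Or.inl hne))

lemma dipole_lower_bound (hd : 3 ≤ d) (α : Fin d) (z : Fin d → ℝ) {n : ℕ} (hn : 1 ≤ n)
    (hz : 2 * enorm' z ≤ n) {x : Fin d → ℝ} (hxα : (n : ℝ) ≤ x α)
    (hx : ∀ i, |x i| ≤ n + 1) :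
    n / 2 / (3 * √d * n) ^ d ≤ |dipole α z x| := by
  have hn' : (1 : ℝ) ≤ n := by exact_mod_cast hn
  have hd' : (3 : ℝ) ≤ d := by exact_mod_cast hd
  have hz_le : ∀ i, |z i| ≤ n / 2 := fun i => (abs_le_enorm' z i).trans (by linarith)
  have hα : (n : ℝ) / 2 ≤ x α - z α := by linarith [le_abs_self (z α), hz_le α]
  set r := enorm' (fun i => x i - z i)
  have hr_pos : 0 < r := (by positivity : (0 : ℝ) < n / 2).trans_le
    (hα.trans ((le_abs_self _).trans (abs_le_enorm' (fun i => x i - z i) α)))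
  have hr_le : r ≤ 3 * √d * n := by
    have := enorm'_le_sqrt_mul (by positivity : (0 : ℝ) ≤ 3 * n) fun i =>
      (abs_sub _ _).trans (by linarith [hx i, hz_le i] : |x i| + |z i| ≤ 3 * n)
    linarith
  have habs : |dipole α z x| = (d - 2) * (x α - z α) / r ^ d := by
    rw [dipole, Real.rpow_neg hr_pos.le, Real.rpow_natCast, abs_mul, abs_mul,
      abs_of_nonpos (by linarith), abs_of_pos (by linarith), abs_of_pos (by positivity)]
    ring
  calc (n : ℝ) / 2 / (3 * √d * n) ^ d ≤ (x α - z α) / r ^ d :=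
        div_le_div₀ (by linarith) hα (by positivity) (pow_le_pow_left₀ hr_pos.le hr_le d)
    _ ≤ (d - 2) * (x α - z α) / r ^ d := by
        gcongr
        exact le_mul_of_one_le_left (by linarith) (by linarith)
    _ = |dipole α z x| := habs.symm

noncomputable def slice (α : Fin d) (n : ℕ) : Finset (Fin d → ℤ) :=
  Fintype.piFinset fun i => if i = α then {(n : ℤ)} else Finset.Icc 1 (n : ℤ)

lemma card_slice (α : Fin d) (n : ℕ) : (slice α n).card = n ^ (d - 1) := by
  simp [slice, Fintype.card_piFinset, apply_ite Finset.card, Finset.prod_ite, Finset.filter_ne']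

lemma apply_eq_of_mem_slice {α : Fin d} {n : ℕ} {g : Fin d → ℤ} (hg : g ∈ slice α n) :
    g α = n := by
  simpa [slice] using Fintype.mem_piFinset.1 hg α

lemma mem_Icc_of_mem_slice {α : Fin d} {n : ℕ} (hn : 1 ≤ n) {g : Fin d → ℤ}
    (hg : g ∈ slice α n) (i : Fin d) : 1 ≤ g i ∧ g i ≤ n := by
  have := Fintype.mem_piFinset.1 hg i
  split_ifs at this
  · rw [Finset.mem_singleton.1 this]; omega
  · exact Finset.mem_Icc.1 this

lemma pairwise_disjoint_slice (α : Fin d) : Pairwise (Disjoint on slice α) := by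
  intro m n hmn
  refine Finset.disjoint_left.2 fun g hm hn => hmn ?_
  have := (apply_eq_of_mem_slice hm).symm.trans (apply_eq_of_mem_slice hn)
  omega

lemma le_sqrt_integral_dipole_of_mem_slice (hd : 3 ≤ d) (α : Fin d) (z : Fin d → ℝ) {n : ℕ}
    (hn : 1 ≤ n) (hz : 2 * enorm' z ≤ n) {g : Fin d → ℤ} (hg : g ∈ slice α n) :
    n / 2 / (3 * √d * n) ^ d ≤ √(∫ x in cube g, |dipole α z x| ^ 2) := by
  have hgα : (g α : ℝ) = n := by exact_mod_cast apply_eq_of_mem_slice hg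
  have hg_Icc (i : Fin d) : (1 : ℝ) ≤ g i ∧ (g i : ℝ) ≤ n := by
    exact_mod_cast mem_Icc_of_mem_slice hn hg i
  refine le_sqrt_setIntegral_cube g ((continuousOn_dipole α z).mono fun x hx => ?_)
    (by positivity) fun x hx => ?_
  · have hzα := (le_abs_self (z α)).trans (abs_le_enorm' z α)
    have hn' : (1 : ℝ) ≤ n := by exact_mod_cast hn
    have := hx.1 α
    simp only [hgα] at this
    exact (by linarith : z α < x α).ne'
  · have hx' := cube_subset_Icc g hx
    refine dipole_lower_bound hd α z hn hz (hgα ▸ hx'.1 α) fun i => abs_le.2 ⟨?_, ?_⟩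
    · linarith [hx'.1 i, hg_Icc i]
    · linarith [hx'.2 i, hg_Icc i]

lemma le_sum_slice_sqrt_integral_dipole (hd : 3 ≤ d) (α : Fin d) (z : Fin d → ℝ) {n : ℕ}
    (hn : 1 ≤ n) (hz : 2 * enorm' z ≤ n) :
    (2 * (3 * √d) ^ d)⁻¹ ≤
      ∑ g ∈ slice α n, √(∫ x in cube g, |dipole α z x| ^ 2) := by
  have hn' : (0 : ℝ) < n := by exact_mod_cast hn
  have hpow : (n : ℝ) ^ (d - 1) * n = n ^ d := by rw [← pow_succ, Nat.sub_add_cancel (by omega)]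
  calc (2 * (3 * √d) ^ d)⁻¹ = (slice α n).card • ((n : ℝ) / 2 / (3 * √d * n) ^ d) := by
        rw [card_slice, nsmul_eq_mul, Nat.cast_pow, mul_div_assoc', mul_pow (3 * √d) (n : ℝ),
          ← hpow]
        field_simp
    _ ≤ _ := Finset.card_nsmul_le_sum _ _ _ fun g hg =>
        le_sqrt_integral_dipole_of_mem_slice hd α z hn hz hg

lemma not_summable_of_le_sum_disjoint {ι : Type*} {f : ι → ℝ} (hf : 0 ≤ f)
    (S : ℕ → Finset ι) (hS : Pairwise (Disjoint on S)) {c : ℝ} (hc : 0 < c)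
    (hcS : ∀ n, c ≤ ∑ i ∈ S n, f i) :
    ¬ Summable f := by
  classical
  intro hsum
  obtain ⟨k, hk⟩ := exists_nat_gt ((∑' i, f i) / c)
  rw [div_lt_iff₀ hc] at hk
  have : k * c ≤ ∑' i, f i :=
    calc k * c = ∑ _n ∈ Finset.range k, c := by simp
      _ ≤ ∑ n ∈ Finset.range k, ∑ i ∈ S n, f i := Finset.sum_le_sum fun n _ => hcS n
      _ = ∑ i ∈ (Finset.range k).biUnion S, f i := (Finset.sum_biUnion (hS.set_pairwise _)).symm
      _ ≤ ∑' i, f i := hsum.sum_le_tsum _ fun i _ => hf i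
  linarith

/-- **Dipole potentials are not `ℓ¹`-summable over cubes.** For `d ≥ 3`, `z ∈ ℝ^d`
and `1 ≤ α ≤ d`, the dipole potential
`v(x) = ∂/∂x_α |x−z|^{2−d} = (2−d)(x_α − z_α)|x−z|^{−d}` satisfies
`∑_{g∈ℤ^d} ‖v‖_{L²([0,1)^d+g)} = ∞`. -/
theorem dipole_not_summable (d : ℕ) (hd : 3 ≤ d) (α : Fin d) (z : Fin d → ℝ) :
    ¬ Summable (fun g : Fin d → ℤ =>
      Real.sqrt (∫ x in cube g,
        |((2 : ℝ) - d) * (x α - z α) * enorm' (fun i => x i - z i) ^ (-(d : ℝ))| ^ 2)) := by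
  set N := ⌈2 * enorm' z⌉₊ + 1
  have hN : 2 * enorm' z ≤ N := (Nat.le_ceil _).trans (by simp [N])
  refine not_summable_of_le_sum_disjoint (fun g => Real.sqrt_nonneg _) (fun n => slice α (n + N))
    ((pairwise_disjoint_slice α).comp_of_injective (add_left_injective N))
    (by positivity : (0 : ℝ) < (2 * (3 * √d) ^ d)⁻¹) fun n => ?_
  refine le_sum_slice_sqrt_integral_dipole hd α z (by omega) (hN.trans ?_)
  exact_mod_cast Nat.le_add_left N n
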